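/- arXiv:1311.0927 — 2 statements merged into one kernel-verified Lean document; each statement's English description precedes it below -/
import Mathlib

section
/- Let B₁ ⊂ ℝ^{k₁} and B₂ ⊂ ℝ^{k₂} be the unit balls of norms p₁ and p₂ respectively, and let B ⊂ ℝ^{k₁+k₂} be the unit ball of the norm p(x,y) = p₁(x) + p₂(y). Then (k₁+k₂)! · vol(B) = k₁! · vol(B₁) · k₂! · vol(B₂). -/
/-!
For a norm `g` on an `n`-dimensional space, slicing `exp (-g)` into level sets gives
`∫ exp (-g) = ∫₀^∞ e^{-t} vol {g ≤ t} dt = vol {g ≤ 1} ∫₀^∞ tⁿ e^{-t} dt = n! · vol {g ≤ 1}`.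
For the ℓ¹-combination the integrand `exp (-p₁ x - p₂ y)` factors, so by Fubini the integral over
the product space is the product of the two integrals.
-/

open MeasureTheory ENNReal Module

section

variable {E : Type*} [AddCommGroup E] [Module ℝ E] [FiniteDimensional ℝ E] [MeasurableSpace E]
  [TopologicalSpace E] [IsTopologicalAddGroup E] [BorelSpace E] [T2Space E] [ContinuousSMul ℝ E]
  (μ : Measure E) [μ.IsAddHaarMeasure] (s : Seminorm ℝ E)

theorem Seminorm.measure_le_one_eq_measure_lt_one (hs : ∀ x, s x = 0 → x = 0) :
    μ {x | s x ≤ 1} = μ {x | s x < 1} := by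
  obtain hE | hE := subsingleton_or_nontrivial E
  · congr 1
    ext x
    simp [Subsingleton.elim x 0]
  · exact measure_le_eq_lt μ (map_zero s) (map_neg_eq_map s) (map_add_le_add s)
      (hs _) (fun r x => (map_smul_eq_mul s r x).le) 1

theorem Seminorm.factorial_finrank_mul_measure_le_one_eq_integral_exp (hs : ∀ x, s x = 0 → x = 0) :
    ((finrank ℝ E).factorial : ℝ≥0∞) * μ {x | s x ≤ 1} =
      ENNReal.ofReal (∫ x, Real.exp (-s x) ∂μ) := by
  have hΓ : Real.Gamma (finrank ℝ E / 1 + 1) = (finrank ℝ E).factorial := by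
    rw [div_one]
    exact_mod_cast Real.Gamma_nat_eq_factorial _
  rw [s.measure_le_one_eq_measure_lt_one μ hs,
    measure_lt_one_eq_integral_div_gamma μ (map_zero s) (map_neg_eq_map s) (map_add_le_add s)
      (hs _) (fun r x => (map_smul_eq_mul s r x).le) one_pos, hΓ]
  simp_rw [Real.rpow_one]
  rw [← ENNReal.ofReal_natCast, ← ENNReal.ofReal_mul (by positivity),
    mul_div_cancel₀ _ (by positivity)]

end

namespace Seminorm

variable {𝕜 E F : Type*} [SeminormedRing 𝕜] [AddCommGroup E] [Module 𝕜 E] [AddCommGroup F]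
  [Module 𝕜 F]

def l1Prod (s₁ : Seminorm 𝕜 E) (s₂ : Seminorm 𝕜 F) : Seminorm 𝕜 (E × F) :=
  s₁.comp (LinearMap.fst 𝕜 E F) + s₂.comp (LinearMap.snd 𝕜 E F)

@[simp]
theorem l1Prod_apply (s₁ : Seminorm 𝕜 E) (s₂ : Seminorm 𝕜 F) (z : E × F) :
    s₁.l1Prod s₂ z = s₁ z.1 + s₂ z.2 :=
  rfl

theorem eq_zero_of_l1Prod_eq_zero {s₁ : Seminorm 𝕜 E} {s₂ : Seminorm 𝕜 F}
    (hs₁ : ∀ x, s₁ x = 0 → x = 0) (hs₂ : ∀ y, s₂ y = 0 → y = 0) (z : E × F)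
    (hz : s₁.l1Prod s₂ z = 0) : z = 0 := by
  obtain ⟨h₁, h₂⟩ := (add_eq_zero_iff_of_nonneg (apply_nonneg s₁ z.1) (apply_nonneg s₂ z.2)).1 hz
  exact Prod.ext (hs₁ _ h₁) (hs₂ _ h₂)

end Seminorm

theorem integral_exp_neg_add_prod {α β : Type*} [MeasurableSpace α] [MeasurableSpace β]
    (μ : Measure α) (ν : Measure β) [SFinite μ] [SFinite ν] (f : α → ℝ) (g : β → ℝ) :
    ∫ z, Real.exp (-(f z.1 + g z.2)) ∂μ.prod ν =
      (∫ x, Real.exp (-f x) ∂μ) * ∫ y, Real.exp (-g y) ∂ν := by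
  simp_rw [neg_add, Real.exp_add]
  exact integral_prod_mul (fun x => Real.exp (-f x)) (fun y => Real.exp (-g y))

theorem volume_l1_sum_of_norms (k₁ k₂ : ℕ)
    (p₁ : EuclideanSpace ℝ (Fin k₁) → ℝ) (p₂ : EuclideanSpace ℝ (Fin k₂) → ℝ)
    (hp₁_smul : ∀ (c : ℝ) x, p₁ (c • x) = |c| * p₁ x)
    (hp₁_add : ∀ x y, p₁ (x + y) ≤ p₁ x + p₁ y)
    (hp₁_def : ∀ x, p₁ x = 0 → x = 0)
    (hp₂_smul : ∀ (c : ℝ) x, p₂ (c • x) = |c| * p₂ x)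
    (hp₂_add : ∀ x y, p₂ (x + y) ≤ p₂ x + p₂ y)
    (hp₂_def : ∀ x, p₂ x = 0 → x = 0) :
    ((Nat.factorial (k₁ + k₂) : ℝ≥0∞)) *
        volume {z : EuclideanSpace ℝ (Fin k₁) × EuclideanSpace ℝ (Fin k₂) |
          p₁ z.1 + p₂ z.2 ≤ 1}
      = ((Nat.factorial k₁ : ℝ≥0∞) * volume {x | p₁ x ≤ 1}) *
          ((Nat.factorial k₂ : ℝ≥0∞) * volume {y | p₂ y ≤ 1}) := by
  let s₁ : Seminorm ℝ (EuclideanSpace ℝ (Fin k₁)) := .of p₁ hp₁_add hp₁_smul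
  let s₂ : Seminorm ℝ (EuclideanSpace ℝ (Fin k₂)) := .of p₂ hp₂_add hp₂_smul
  have h₁ := s₁.factorial_finrank_mul_measure_le_one_eq_integral_exp volume hp₁_def
  have h₂ := s₂.factorial_finrank_mul_measure_le_one_eq_integral_exp volume hp₂_def
  have h := (s₁.l1Prod s₂).factorial_finrank_mul_measure_le_one_eq_integral_exp
    (volume.prod volume) (Seminorm.eq_zero_of_l1Prod_eq_zero hp₁_def hp₂_def)
  simp only [finrank_prod, finrank_euclideanSpace_fin, Seminorm.l1Prod_apply] at h₁ h₂ h
  calc _ = ENNReal.ofReal (∫ z, Real.exp (-(p₁ z.1 + p₂ z.2)) ∂volume.prod volume) := by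
        rw [Measure.volume_eq_prod]
        exact h
    _ = ENNReal.ofReal ((∫ x, Real.exp (-p₁ x)) * ∫ y, Real.exp (-p₂ y)) := by
        rw [integral_exp_neg_add_prod]
    _ = _ := by
        rw [ENNReal.ofReal_mul (integral_nonneg fun _ => (Real.exp_pos _).le)]
        exact congrArg₂ _ h₁.symm h₂.symm
end

section
/- With q and η̂ as above (q(x) = max(max_i |x_i|, |η̂·x|), η̂ = (−c_n/c₁,…,−c_n/c_{n-1}), 0 < c_n ≤ c_i), the dual norm satisfies q*(η̂) = min(1, Σ_{i=1}^{n-1} c_n/c_i). -/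
open scoped RealInnerProductSpace

/-- The dual norm of `p`: `p*(v) = sup {|⟪v,x⟫| : p x ≤ 1}`. -/
noncomputable def dualNorm {m : ℕ} (p : EuclideanSpace ℝ (Fin m) → ℝ)
    (v : EuclideanSpace ℝ (Fin m)) : ℝ :=
  sSup {r : ℝ | ∃ x, p x ≤ 1 ∧ r = |⟪v, x⟫|}

/-!
For `q x = max ‖x‖∞ |⟪η, x⟫|`, every `x` with `q x ≤ 1` has `|⟪η, x⟫| ≤ 1` and, by the
`ℓ¹`–`ℓ∞` Hölder inequality, `|⟪η, x⟫| ≤ ‖η‖₁`; so `q*(η) ≤ min 1 ‖η‖₁`. The bound is attained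
at `x = t • sign η` with `t = min 1 ‖η‖₁ / ‖η‖₁ ≤ 1`, for which `⟪η, x⟫ = t ‖η‖₁`.
For the vector `η̂`, `‖η̂‖₁ = ∑ cn / c i`.
-/

theorem dualNorm_eq_of_forall_le_of_exists {m : ℕ} {p : EuclideanSpace ℝ (Fin m) → ℝ}
    {v : EuclideanSpace ℝ (Fin m)} {a : ℝ} (hle : ∀ x, p x ≤ 1 → |⟪v, x⟫| ≤ a)
    (hex : ∃ x, p x ≤ 1 ∧ |⟪v, x⟫| = a) : dualNorm p v = a := by
  obtain ⟨x₀, hx₀, rfl⟩ := hex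
  refine IsGreatest.csSup_eq ⟨⟨x₀, hx₀, rfl⟩, ?_⟩
  rintro _ ⟨x, hx, rfl⟩
  exact hle x hx

theorem EuclideanSpace.abs_inner_le_sum_abs_of_abs_le_one {m : ℕ}
    (v x : EuclideanSpace ℝ (Fin m)) (hx : ∀ i, |x i| ≤ 1) : |⟪v, x⟫| ≤ ∑ i, |v i| := by
  rw [PiLp.inner_apply]
  refine (Finset.abs_sum_le_sum_abs _ _).trans (Finset.sum_le_sum fun i _ => ?_)
  rw [RCLike.inner_apply, conj_trivial, abs_mul]
  exact mul_le_of_le_one_left (abs_nonneg _) (hx i)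

theorem EuclideanSpace.inner_toLp_mul_sign {m : ℕ} (v : EuclideanSpace ℝ (Fin m)) (t : ℝ) :
    ⟪v, WithLp.toLp 2 (fun i => t * SignType.sign (v i))⟫ = t * ∑ i, |v i| := by
  simp only [PiLp.inner_apply, RCLike.inner_apply, conj_trivial, Finset.mul_sum]
  refine Finset.sum_congr rfl fun i _ => ?_
  simp only [← self_mul_sign (v i)]
  ring

theorem abs_sign_le_one {α : Type*} [Ring α] [LinearOrder α] [IsStrictOrderedRing α] (a : α) :
    |(SignType.sign a : α)| ≤ 1 := by
  rcases lt_trichotomy a 0 with h | h | h <;> simp [h]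

theorem dualNorm_max_iSup_abs_abs_inner {m : ℕ} (η : EuclideanSpace ℝ (Fin m)) :
    dualNorm (fun x => max (⨆ i, |x i|) |⟪η, x⟫|) η = min 1 (∑ i, |η i|) := by
  set S := ∑ i, |η i|
  have hS : 0 ≤ S := Finset.sum_nonneg fun i _ => abs_nonneg _
  have hmin : 0 ≤ min 1 S := le_min zero_le_one hS
  refine dualNorm_eq_of_forall_le_of_exists (fun x hx => ?_) ?_
  · rw [max_le_iff] at hx
    have hxi : ∀ i, |x i| ≤ 1 := fun i => (le_ciSup (Finite.bddAbove_range _) i).trans hx.1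
    exact le_min hx.2 (EuclideanSpace.abs_inner_le_sum_abs_of_abs_le_one η x hxi)
  set t := min 1 S / S
  have ht : 0 ≤ t := div_nonneg hmin hS
  have hinner : ⟪η, WithLp.toLp 2 (fun i => t * SignType.sign (η i))⟫ = min 1 S := by
    rw [EuclideanSpace.inner_toLp_mul_sign]
    exact div_mul_cancel_of_imp fun h => by simp [h]
  refine ⟨_, max_le (Real.iSup_le (fun i => ?_) zero_le_one) ?_, by rw [hinner, abs_of_nonneg hmin]⟩
  · rw [abs_mul, abs_of_nonneg ht]
    exact mul_le_one₀ (div_le_one_of_le₀ (min_le_right _ _) hS) (abs_nonneg _) (abs_sign_le_one _)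
  · rw [hinner, abs_of_nonneg hmin]
    exact min_le_left _ _

theorem dual_norm_of_eta_general (m : ℕ)
    (c : Fin m → ℝ) (cn : ℝ) (hcn : 0 < cn) (hc : ∀ i, cn ≤ c i)
    (η : EuclideanSpace ℝ (Fin m)) (hη : ∀ i, η i = -cn / c i)
    (q : EuclideanSpace ℝ (Fin m) → ℝ)
    (hq : ∀ x, q x = max (⨆ i : Fin m, |x i|) |⟪η, x⟫|) :
    dualNorm q η = min 1 (∑ i, cn / c i) := by
  have habs : ∀ i, |η i| = cn / c i := fun i => by
    rw [hη, neg_div, abs_neg, abs_of_pos (div_pos hcn (hcn.trans_le (hc i)))]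
  rw [funext hq, dualNorm_max_iSup_abs_abs_inner]
  simp only [habs]

theorem dual_norm_of_eta (m : ℕ) (hm : 0 < m)
    (c : Fin m → ℝ) (cn : ℝ) (hcn : 0 < cn) (hc : ∀ i, cn ≤ c i)
    (η : EuclideanSpace ℝ (Fin m)) (hη : ∀ i, η i = -cn / c i)
    (q : EuclideanSpace ℝ (Fin m) → ℝ)
    (hq : ∀ x, q x = max (⨆ i : Fin m, |x i|) |⟪η, x⟫|) :
    dualNorm q η = min 1 (∑ i, cn / c i) :=
  dual_norm_of_eta_general m c cn hcn hc η hη q hq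
end
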